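/- arXiv:1405.6675 — 3 statements merged into one kernel-verified Lean document; each statement's English description precedes it below -/
import Mathlib

section
/- Let u₀ : ℝ → ℝ be a continuous, 1-periodic, continuously differentiable function with u₀(x₀) = 0 at some point x₀ and u₀ not identically zero. Then there exists a point a ∈ ℝ such that u₀'(a) < -√(3/2)·|u₀(a)|. -/
/-!
If `u₀' ≥ -c |u₀|` held everywhere, then on any stretch where `u₀ > 0` the function would decay
at most exponentially, so `u₀` could never fall from a positive value back to zero; by the
symmetry `u ↦ -u(-·)` it could not rise from a negative value to zero either, going backwards.
Periodicity puts zeros of `u₀` on both sides of any point where `u₀ ≠ 0`. The constant `√(3/2)`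
plays no role: any constant works.
-/

open Real Set

section DerivLowerBound

variable {u u' : ℝ → ℝ} {c y z : ℝ}

/-- Fence `u` from below by `u y * exp (-(c + 1) (t - y))`; the rate `c + 1` rather than `c`
gives the strict inequality at contact points that the fencing lemma requires. -/
theorem pos_of_neg_mul_abs_le_deriv (hu : ∀ t, HasDerivAt u (u' t) t)
    (hbound : ∀ t, -c * |u t| ≤ u' t) (hy : 0 < u y) (hyz : y ≤ z) : 0 < u z := by
  set barrier : ℝ → ℝ := fun t => u y * exp (-(c + 1) * (t - y))
  have hbarrier : ∀ t, HasDerivAt (fun t => -barrier t) ((c + 1) * barrier t) t := fun t => by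
    refine ((((hasDerivAt_id t).sub_const y).const_mul (-(c + 1))).exp.const_mul (u y)).fun_neg
      |>.congr_deriv ?_
    simp only [barrier, id]
    ring
  have hfence := image_le_of_deriv_right_lt_deriv_boundary (f := fun t => -u t) (a := y) (b := z)
    (fun t _ => (hu t).continuousAt.neg.continuousWithinAt) (fun t _ => (hu t).neg.hasDerivWithinAt)
    (by simp [barrier]) hbarrier
    (fun t _ heq => by
      have hut : u t = barrier t := neg_inj.mp heq
      have hpos : 0 < u t := hut ▸ mul_pos hy (exp_pos _)
      have := hbound t
      rw [abs_of_pos hpos] at this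
      rw [← hut]
      linarith)
    ⟨hyz, le_rfl⟩
  have : 0 < barrier z := mul_pos hy (exp_pos _)
  linarith

theorem neg_of_neg_mul_abs_le_deriv (hu : ∀ t, HasDerivAt u (u' t) t)
    (hbound : ∀ t, -c * |u t| ≤ u' t) (hy : u y < 0) (hzy : z ≤ y) : u z < 0 := by
  have hv : ∀ t, HasDerivAt (fun t => -u (-t)) (u' (-t)) t := fun t => by
    refine ((hu (-t)).comp t (hasDerivAt_neg t)).fun_neg.congr_deriv ?_
    ring
  have := pos_of_neg_mul_abs_le_deriv (u := fun t => -u (-t)) (c := c) hv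
    (fun t => by simpa only [abs_neg] using hbound (-t)) (by simpa using hy) (neg_le_neg hzy)
  simpa using this

end DerivLowerBound

theorem stmt_0 (u₀ : ℝ → ℝ) (hC1 : ContDiff ℝ 1 u₀)
    (hper : ∀ x, u₀ (x + 1) = u₀ x)
    (x₀ : ℝ) (hzero : u₀ x₀ = 0)
    (hne : ∃ x, u₀ x ≠ 0) :
    ∃ a : ℝ, deriv u₀ a < -Real.sqrt (3/2) * |u₀ a| := by
  by_contra! hbound
  have hu : ∀ t, HasDerivAt u₀ (deriv u₀ t) t :=
    fun t => (hC1.differentiable one_ne_zero t).hasDerivAt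
  have hperiodic : Function.Periodic u₀ 1 := hper
  obtain ⟨y, hy⟩ := hne
  rcases hy.lt_or_gt with hneg | hpos
  · obtain ⟨z, ⟨-, hzy⟩, hz⟩ := hperiodic.exists_mem_Ioc one_pos x₀ (y - 1)
    have := neg_of_neg_mul_abs_le_deriv hu hbound hneg (hzy.trans_eq (sub_add_cancel y 1))
    linarith
  · obtain ⟨z, ⟨hyz, -⟩, hz⟩ := hperiodic.exists_mem_Ico one_pos x₀ y
    have := pos_of_neg_mul_abs_le_deriv hu hbound hpos hyz
    linarith
end

section
/- Let p(x) = cosh(x - ⌊x⌋ - 1/2)/(2·sinh(1/2)) for x ∈ ℝ. Then for any β ∈ ℝ, the function p + β·p' is nonnegative on ℝ \ ℤ (where p is differentiable) if and only if |β| ≤ coth(1/2). -/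
lemma deriv_p_aux (p : ℝ → ℝ)
    (hp : ∀ x, p x = Real.cosh (x - (⌊x⌋ : ℝ) - 1/2) / (2 * Real.sinh (1/2)))
    (x : ℝ) (hx : x ∉ Set.range (Int.cast : ℤ → ℝ)) :
    deriv p x = Real.sinh (x - (⌊x⌋ : ℝ) - 1/2) / (2 * Real.sinh (1/2)) := by
  have hne : (⌊x⌋ : ℝ) ≠ x := fun h => hx ⟨⌊x⌋, h⟩
  have hlt : (⌊x⌋ : ℝ) < x := lt_of_le_of_ne (Int.floor_le x) hne
  have hub : x < (⌊x⌋ : ℝ) + 1 := Int.lt_floor_add_one x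
  have hmem : x ∈ Set.Ioo ((⌊x⌋ : ℝ)) ((⌊x⌋ : ℝ) + 1) := ⟨hlt, hub⟩
  have hopen : Set.Ioo ((⌊x⌋ : ℝ)) ((⌊x⌋ : ℝ) + 1) ∈ nhds x :=
    (isOpen_Ioo).mem_nhds hmem
  have hEq : p =ᶠ[nhds x]
      fun y => Real.cosh (y - (⌊x⌋ : ℝ) - 1/2) / (2 * Real.sinh (1/2)) := by
    filter_upwards [hopen] with y hy
    have hfl : ⌊y⌋ = ⌊x⌋ := by
      rw [Int.floor_eq_iff]
      exact ⟨le_of_lt hy.1, hy.2⟩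
    rw [hp y, hfl]
  rw [hEq.deriv_eq]
  have hd : HasDerivAt (fun y : ℝ => Real.cosh (y - (⌊x⌋ : ℝ) - 1/2))
      (Real.sinh (x - (⌊x⌋ : ℝ) - 1/2) * 1) x := by
    have h1 : HasDerivAt (fun y : ℝ => y - (⌊x⌋ : ℝ) - 1/2) 1 x := by
      simpa using ((hasDerivAt_id x).sub_const ((⌊x⌋ : ℝ))).sub_const (1/2)
    exact h1.cosh
  have := (hd.div_const (2 * Real.sinh (1/2))).deriv
  simpa using this

theorem stmt_3 (p : ℝ → ℝ)
    (hp : ∀ x, p x = Real.cosh (x - (⌊x⌋ : ℝ) - 1/2) / (2 * Real.sinh (1/2)))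
    (β : ℝ) :
    (∀ x : ℝ, x ∉ Set.range (Int.cast : ℤ → ℝ) → p x + β * deriv p x ≥ 0) ↔
      |β| ≤ Real.cosh (1/2) / Real.sinh (1/2) := by
  have hs : (0:ℝ) < Real.sinh (1/2) := Real.sinh_pos_iff.2 (by norm_num)
  have hden : (0:ℝ) < 2 * Real.sinh (1/2) := by linarith
  constructor
  · intro h
    by_contra hcon
    push_neg at hcon
    -- f t = cosh t - |β| sinh t is negative at 1/2, hence on some t ∈ (0, 1/2)
    have hf : Real.cosh (1/2) - |β| * Real.sinh (1/2) < 0 := by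
      have := (div_lt_iff₀ hs).1 hcon
      linarith
    have hcont : ContinuousAt (fun t : ℝ => Real.cosh t - |β| * Real.sinh t) (1/2) :=
      (Real.continuous_cosh.sub (continuous_const.mul Real.continuous_sinh)).continuousAt
    have hev : ∀ᶠ t in nhds (1/2 : ℝ), Real.cosh t - |β| * Real.sinh t < 0 :=
      hcont.eventually_lt continuousAt_const hf
    haveI hne : (nhdsWithin (1/2 : ℝ) (Set.Ioo 0 (1/2))).NeBot :=
      mem_closure_iff_nhdsWithin_neBot.1 (by
        rw [closure_Ioo (by norm_num : (0:ℝ) ≠ 1/2)]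
        exact ⟨by norm_num, le_refl _⟩)
    have h2 : ∀ᶠ t in nhdsWithin (1/2 : ℝ) (Set.Ioo 0 (1/2)),
        (Real.cosh t - |β| * Real.sinh t < 0) ∧ t ∈ Set.Ioo (0:ℝ) (1/2) :=
      (hev.filter_mono nhdsWithin_le_nhds).and eventually_mem_nhdsWithin
    obtain ⟨t, hftneg, ht⟩ := h2.exists
    -- choose x depending on sign of β
    set x : ℝ := if 0 ≤ β then 1/2 - t else 1/2 + t with hxdef
    have hx01 : 0 < x ∧ x < 1 := by
      rcases le_or_gt 0 β with hb | hb
      · simp only [hxdef, if_pos hb]; constructor <;> [linarith [ht.2]; linarith [ht.1]]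
      · simp only [hxdef, if_neg (not_le.2 hb)]; constructor <;> [linarith [ht.1]; linarith [ht.2]]
    have hxnot : x ∉ Set.range (Int.cast : ℤ → ℝ) := by
      rintro ⟨n, hn⟩
      rw [← hn] at hx01
      have h1 : (0:ℤ) < n := by exact_mod_cast hx01.1
      have h2 : n < (1:ℤ) := by exact_mod_cast hx01.2
      omega
    have hfl : ⌊x⌋ = 0 := Int.floor_eq_zero_iff.2 ⟨le_of_lt hx01.1, hx01.2⟩
    have hder := deriv_p_aux p hp x hxnot
    have hval := h x hxnot
    rw [hp x, hder, hfl] at hval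
    have hnum : Real.cosh (x - (0:ℤ) - 1/2) + β * Real.sinh (x - (0:ℤ) - 1/2) < 0 := by
      rcases le_or_gt 0 β with hb | hb
      · have hx' : x - (0:ℤ) - 1/2 = -t := by
          rw [hxdef, if_pos hb]; push_cast; ring
        rw [hx', Real.cosh_neg, Real.sinh_neg]
        rw [abs_of_nonneg hb] at hftneg
        linarith
      · have hx' : x - (0:ℤ) - 1/2 = t := by
          rw [hxdef, if_neg (not_le.2 hb)]; push_cast; ring
        rw [hx']
        rw [abs_of_neg hb] at hftneg
        linarith
    have : Real.cosh (x - (0:ℤ) - 1/2) / (2 * Real.sinh (1/2))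
        + β * (Real.sinh (x - (0:ℤ) - 1/2) / (2 * Real.sinh (1/2))) < 0 := by
      have heq : Real.cosh (x - (0:ℤ) - 1/2) / (2 * Real.sinh (1/2))
          + β * (Real.sinh (x - (0:ℤ) - 1/2) / (2 * Real.sinh (1/2)))
          = (Real.cosh (x - (0:ℤ) - 1/2) + β * Real.sinh (x - (0:ℤ) - 1/2))
            / (2 * Real.sinh (1/2)) := by ring
      rw [heq]
      exact div_neg_of_neg_of_pos hnum hden
    linarith [hval, this]
  · intro hβ x hx
    have hne : (⌊x⌋ : ℝ) ≠ x := fun h => hx ⟨⌊x⌋, h⟩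
    have hlt : (⌊x⌋ : ℝ) < x := lt_of_le_of_ne (Int.floor_le x) hne
    have hub : x < (⌊x⌋ : ℝ) + 1 := Int.lt_floor_add_one x
    set t : ℝ := x - (⌊x⌋ : ℝ) - 1/2 with htdef
    have htabs : |t| ≤ 1/2 := by
      rw [abs_le]; constructor <;> [linarith; linarith]
    rw [hp x, deriv_p_aux p hp x hx, ← htdef]
    have key : 0 ≤ Real.cosh t + β * Real.sinh t := by
      have h1 : |β * Real.sinh t| ≤ (Real.cosh (1/2) / Real.sinh (1/2)) * Real.sinh |t| := by
        rw [abs_mul, Real.abs_sinh]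
        exact mul_le_mul_of_nonneg_right hβ (Real.sinh_nonneg_iff.2 (abs_nonneg t))
      have h2 : (Real.cosh (1/2) / Real.sinh (1/2)) * Real.sinh |t| ≤ Real.cosh t := by
        rw [div_mul_eq_mul_div, div_le_iff₀ hs]
        have := Real.sinh_nonneg_iff.2 (by linarith : (0:ℝ) ≤ 1/2 - |t|)
        rw [Real.sinh_sub] at this
        rw [← Real.cosh_abs t]
        nlinarith
      have := neg_abs_le (β * Real.sinh t)
      linarith [abs_le.1 h1]
    have : 0 ≤ (Real.cosh t + β * Real.sinh t) / (2 * Real.sinh (1/2)) :=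
      div_nonneg key (le_of_lt hden)
    calc (0:ℝ) ≤ (Real.cosh t + β * Real.sinh t) / (2 * Real.sinh (1/2)) := this
      _ = Real.cosh t / (2 * Real.sinh (1/2)) + β * (Real.sinh t / (2 * Real.sinh (1/2))) := by
          ring
end

section
/- Let f, g : [0, T) → ℝ be C¹ functions satisfying f'(t) ≥ f(t)·g(t) and g'(t) ≥ f(t)·g(t) for all t ∈ (0, T), with f(0) > 0 and g(0) > 0. Then f and g remain positive on [0, T), and the function h(t) = √(f(t)·g(t)) satisfies h'(t) ≥ h(t)² wherever differentiable; consequently T ≤ 1/√(f(0)·g(0)). -/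
/-! While `f` and `g` are positive their derivatives are at least `f * g > 0`, so they increase
from their positive initial values and a first-exit argument shows they stay positive on `[0, T)`.
Then `h = √(f g)` satisfies `h' = (f' g + f g') / (2h) ≥ f g (f + g) / (2h) ≥ h²` by AM-GM, so
`t + 1 / h t` is antitone; as `1 / h > 0`, every `t < T` satisfies `t < 1 / h 0`. -/

open Set

theorem pos_on_Icc_of_no_first_nonpos {p : ℝ → ℝ} {a b : ℝ} (hp : ContinuousOn p (Icc a b))
    (ha : 0 < p a) (hstep : ∀ c ∈ Ioc a b, (∀ x ∈ Ico a c, 0 < p x) → 0 < p c) :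
    ∀ x ∈ Icc a b, 0 < p x := by
  by_contra! hneg
  obtain ⟨c, ⟨hc, hpc⟩, hleast⟩ : ∃ c, IsLeast (Icc a b ∩ p ⁻¹' Iic 0) c :=
    (isCompact_Icc.of_isClosed_subset (hp.preimage_isClosed_of_isClosed isClosed_Icc isClosed_Iic)
      inter_subset_left).exists_isLeast (let ⟨x, hx, hpx⟩ := hneg; ⟨x, hx, hpx⟩)
  have hac : a < c := hc.1.lt_of_ne fun hac => (hac ▸ ha).not_ge hpc
  refine (hstep c ⟨hac, hc.2⟩ fun x hx => ?_).not_ge hpc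
  by_contra! hpx
  exact hx.2.not_ge (hleast ⟨⟨hx.1, hx.2.le.trans hc.2⟩, hpx⟩)

theorem pos_of_deriv_ge_mul {f g : ℝ → ℝ} {a b : ℝ} (hfc : ContinuousOn f (Ico a b))
    (hgc : ContinuousOn g (Ico a b)) (hfd : DifferentiableOn ℝ f (Ioo a b))
    (hgd : DifferentiableOn ℝ g (Ioo a b)) (hfa : 0 < f a) (hga : 0 < g a)
    (hf' : ∀ t ∈ Ioo a b, f t * g t ≤ deriv f t) (hg' : ∀ t ∈ Ioo a b, f t * g t ≤ deriv g t) :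
    ∀ t ∈ Ico a b, 0 < f t ∧ 0 < g t := by
  intro s hs
  have hsub : Icc a s ⊆ Ico a b := Icc_subset_Ico_right hs.2
  suffices ∀ x ∈ Icc a s, 0 < min (f x) (g x) from lt_min_iff.1 (this s (right_mem_Icc.2 hs.1))
  refine pos_on_Icc_of_no_first_nonpos ((hfc.mono hsub).inf (hgc.mono hsub)) (lt_min hfa hga)
    fun c hc hpos => ?_
  have hcb : Ioo a c ⊆ Ioo a b := Ioo_subset_Ioo_right (hc.2.trans hs.2.le)
  have hca : a ≤ c := hc.1.le
  have increase {u : ℝ → ℝ} (huc : ContinuousOn u (Ico a b)) (hud : DifferentiableOn ℝ u (Ioo a b))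
      (hu' : ∀ t ∈ Ioo a b, f t * g t ≤ deriv u t) : u a ≤ u c := by
    refine monotoneOn_of_deriv_nonneg (convex_Icc a c)
      (huc.mono ((Icc_subset_Icc_right hc.2).trans hsub)) ?_ ?_ (left_mem_Icc.2 hca)
      (right_mem_Icc.2 hca) hca <;> rw [interior_Icc]
    · exact hud.mono hcb
    · intro t ht
      obtain ⟨hft, hgt⟩ := lt_min_iff.1 (hpos t (Ioo_subset_Ico_self ht))
      exact (mul_pos hft hgt).le.trans (hu' t (hcb ht))
  exact lt_min (hfa.trans_le (increase hfc hfd hf')) (hga.trans_le (increase hgc hgd hg'))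

theorem sq_sqrt_mul_le_deriv {f g : ℝ → ℝ} {t : ℝ} (hf : DifferentiableAt ℝ f t)
    (hg : DifferentiableAt ℝ g t) (hft : 0 < f t) (hgt : 0 < g t)
    (hf' : f t * g t ≤ deriv f t) (hg' : f t * g t ≤ deriv g t) :
    √(f t * g t) ^ 2 ≤ deriv (fun s => √(f s * g s)) t := by
  have hfg := mul_pos hft hgt
  have hfg' : HasDerivAt (fun s => f s * g s) (deriv f t * g t + f t * deriv g t) t :=
    hf.hasDerivAt.mul hg.hasDerivAt
  rw [(hfg'.sqrt hfg.ne').deriv, Real.sq_sqrt hfg.le, le_div_iff₀ (by positivity)]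
  have amgm : 2 * √(f t * g t) ≤ f t + g t := by
    nlinarith [sq_nonneg (f t - g t), Real.sq_sqrt hfg.le, Real.sqrt_nonneg (f t * g t)]
  nlinarith [mul_le_mul_of_nonneg_right hf' hgt.le, mul_le_mul_of_nonneg_left hg' hft.le]

theorem sub_le_inv_of_sq_le_deriv {h : ℝ → ℝ} {a b : ℝ} (hc : ContinuousOn h (Ico a b))
    (hd : DifferentiableOn ℝ h (Ioo a b)) (hric : ∀ t ∈ Ioo a b, h t ^ 2 ≤ deriv h t)
    (ha : 0 < h a) : b - a ≤ (h a)⁻¹ := by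
  have hmono : MonotoneOn h (Ico a b) := by
    refine monotoneOn_of_deriv_nonneg (convex_Ico a b) hc ?_ ?_ <;> rw [interior_Ico]
    · exact hd
    · exact fun t ht => (sq_nonneg _).trans (hric t ht)
  have hpos : ∀ t ∈ Ico a b, 0 < h t := fun t ht =>
    ha.trans_le (hmono (left_mem_Ico.2 (ht.1.trans_lt ht.2)) ht ht.1)
  have hanti : AntitoneOn (fun t => t + (h t)⁻¹) (Ico a b) := by
    refine antitoneOn_of_deriv_nonpos (convex_Ico a b)
      (continuousOn_id.add (hc.inv₀ fun t ht => (hpos t ht).ne')) ?_ ?_ <;> rw [interior_Ico]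
    · exact differentiableOn_id.add (hd.inv fun t ht => (hpos t (Ioo_subset_Ico_self ht)).ne')
    · intro t ht
      have ht0 := hpos t (Ioo_subset_Ico_self ht)
      have hderiv : HasDerivAt (fun t => t + (h t)⁻¹) (1 + -deriv h t / h t ^ 2) t :=
        (hasDerivAt_id' t).add
          ((hd.differentiableAt (isOpen_Ioo.mem_nhds ht)).hasDerivAt.inv ht0.ne')
      rw [hderiv.deriv, neg_div, ← sub_eq_add_neg, sub_nonpos, le_div_iff₀ (by positivity)]
      simpa using hric t ht
  by_contra! hlt
  set t := a + (h a)⁻¹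
  have ht : t ∈ Ico a b := ⟨le_add_of_nonneg_right (inv_pos.2 ha).le, by linarith⟩
  have hdecr : t + (h t)⁻¹ ≤ a + (h a)⁻¹ := hanti (left_mem_Ico.2 (ht.1.trans_lt ht.2)) ht ht.1
  linarith [inv_pos.2 (hpos t ht)]

theorem stmt_6_general (T : ℝ) (f g : ℝ → ℝ)
    (hf : ContDiffOn ℝ 1 f (Set.Ico 0 T))
    (hg : ContDiffOn ℝ 1 g (Set.Ico 0 T))
    (hf0 : 0 < f 0) (hg0 : 0 < g 0)
    (hf' : ∀ t ∈ Set.Ioo 0 T, deriv f t ≥ f t * g t)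
    (hg' : ∀ t ∈ Set.Ioo 0 T, deriv g t ≥ f t * g t) :
    T ≤ 1 / Real.sqrt (f 0 * g 0) := by
  have hfd : DifferentiableOn ℝ f (Ioo 0 T) :=
    (hf.differentiableOn one_ne_zero).mono Ioo_subset_Ico_self
  have hgd : DifferentiableOn ℝ g (Ioo 0 T) :=
    (hg.differentiableOn one_ne_zero).mono Ioo_subset_Ico_self
  have hpos : ∀ t ∈ Ioo 0 T, 0 < f t ∧ 0 < g t := fun t ht =>
    pos_of_deriv_ge_mul hf.continuousOn hg.continuousOn hfd hgd hf0 hg0 hf' hg' t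
      (Ioo_subset_Ico_self ht)
  have hsqrt : DifferentiableOn ℝ (fun t => √(f t * g t)) (Ioo 0 T) :=
    (hfd.mul hgd).sqrt fun t ht => (mul_pos (hpos t ht).1 (hpos t ht).2).ne'
  have hriccati : ∀ t ∈ Ioo 0 T, √(f t * g t) ^ 2 ≤ deriv (fun s => √(f s * g s)) t :=
    fun t ht => sq_sqrt_mul_le_deriv (hfd.differentiableAt (isOpen_Ioo.mem_nhds ht))
      (hgd.differentiableAt (isOpen_Ioo.mem_nhds ht)) (hpos t ht).1 (hpos t ht).2
      (hf' t ht) (hg' t ht)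
  simpa using sub_le_inv_of_sq_le_deriv (hf.continuousOn.mul hg.continuousOn).sqrt hsqrt
    hriccati (Real.sqrt_pos.2 (mul_pos hf0 hg0))

theorem stmt_6 (T : ℝ) (hT : 0 < T) (f g : ℝ → ℝ)
    (hf : ContDiffOn ℝ 1 f (Set.Ico 0 T))
    (hg : ContDiffOn ℝ 1 g (Set.Ico 0 T))
    (hf0 : 0 < f 0) (hg0 : 0 < g 0)
    (hf' : ∀ t ∈ Set.Ioo 0 T, deriv f t ≥ f t * g t)
    (hg' : ∀ t ∈ Set.Ioo 0 T, deriv g t ≥ f t * g t) :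
    T ≤ 1 / Real.sqrt (f 0 * g 0) :=
  stmt_6_general T f g hf hg hf0 hg0 hf' hg'
end
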